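/- Let d ≥ 1 be an integer and let f : [1,∞) → (0,∞) be increasing, (d+1)-times differentiable, satisfying the doubling condition f(2x) ≤ D·f(x) and |f^{(m)}(t)| ≤ C₀·f'(t)/t^{m−1} for all t ≥ 1 and 1 ≤ m ≤ d+1; extend f to [0,∞) by f(t) = f(1) for 0 ≤ t ≤ 1. Then there exists a constant C, depending only on d, D and C₀, such that for all integers n ≥ 1: ∑_{j=0}^{n} |Δ^{d+1}_j (A_{n−j}^d f(j))| · A_j^d ≤ C · f(n) · A_n^d, where the difference operator Δ^{d+1} acts in j on the sequence b_j = A_{n−j}^d f(j). -/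

import Mathlib

/-- `Acoef k m = A_k^m = C(k+m, k)` for `k ≥ 0`, and `0` for `k < 0`. -/
def Acoef (k : ℤ) (m : ℕ) : ℝ :=
  if 0 ≤ k then (Nat.choose (k.toNat + m) k.toNat : ℝ) else 0

/-!
Write `b_y = u_y F_y` with `u_y = A_{n-y}^d` and `F_y = f (max y 1)`. For `1 ≤ j ≤ n - d - 1` the
discrete Leibniz rule gives `Δ^{d+1} b_j = ∑_k C(d+1,k) Δ^k u_j Δ^{d+1-k} F_{j+k}`, where
`Δ^k u_j = ± C(n-j-k+d, d-k)` and `Δ^{d+1} u_j = 0`. By the mean value theorem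
`|Δ^{d+1-k} F_{j+k}|` is at most the size of `f^{(d+1-k)}` on `[j, j+d+1]`, hence at most
`C₀ e^{C₀(d+1)} f'(j) / j^{d-k}`: the bound `|f''| ≤ C₀ f'` lets `f'` grow by at most that factor
over an interval of length `d+1` (Grönwall). As `C(n-j-k+d, d-k) A_j^d ≲ j^{d-k} A_n^d`, the
`j`-th term is `≲ f'(j) A_n^d ≲ (f(j+1) - f(j)) A_n^d`, and these telescope to `≲ f(n) A_n^d`.
Each of the remaining `d + 2` indices contributes at most
`2^{d+1} A_{n-j}^d f(n) A_j^d ≤ 2^{d+1} C(2d,d) f(n) A_n^d`.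
-/

open Finset Function Real
open scoped fwdDiff Nat

section ForwardDifference

variable {M R : Type*} [AddCommMonoid M] [CommRing R] (h : M)

theorem fwdDiff_iter_mul (u v : M → R) (m : ℕ) (y : M) :
    Δ_[h] ^[m] (u * v) y =
      ∑ k ∈ range (m + 1), m.choose k * (Δ_[h] ^[k] u y * Δ_[h] ^[m - k] v (y + k • h)) := by
  induction m generalizing y with
  | zero => simp
  | succ m ih =>
    rw [sum_choose_succ_mul (fun k l => Δ_[h] ^[k] u y * Δ_[h] ^[l] v (y + k • h)),
      iterate_succ_apply', fwdDiff, ih, ih, ← sum_add_distrib, ← sum_sub_distrib]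
    refine sum_congr rfl fun k hk => ?_
    rw [Nat.succ_sub (mem_range_succ_iff.mp hk)]
    simp only [iterate_succ_apply', fwdDiff, succ_nsmul, ← add_assoc, add_right_comm y _ h]
    ring

theorem sum_neg_one_pow_mul_choose_mul (b : M → R) (m : ℕ) (y : M) :
    ∑ i ∈ range (m + 1), (-1 : R) ^ i * m.choose i * b (y + i • h) =
      (-1) ^ m * Δ_[h] ^[m] b y := by
  rw [fwdDiff_iter_eq_sum_shift, mul_sum]
  refine sum_congr rfl fun i hi => ?_
  have hsign : (-1 : R) ^ m * (-1) ^ (m - i) = (-1) ^ i := by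
    rw [← pow_add, show m + (m - i) = i + 2 * (m - i) by grind, pow_add, pow_mul]
    simp
  rw [zsmul_eq_mul]
  push_cast
  linear_combination -(m.choose i * b (y + i • h) : R) * hsign

theorem fwdDiff_iter_congr {G : Type*} [AddCommGroup G] {b c : M → G} {m : ℕ} {y : M}
    (hbc : ∀ i ≤ m, b (y + i • h) = c (y + i • h)) : Δ_[h] ^[m] b y = Δ_[h] ^[m] c y := by
  simp only [fwdDiff_iter_eq_sum_shift]
  exact sum_congr rfl fun i hi => by rw [hbc i (mem_range_succ_iff.mp hi)]

theorem fwdDiff_iter_comp_addMonoidHom {N G : Type*} [AddCommMonoid N] [AddCommGroup G]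
    (ψ : M →+ N) (g : N → G) (m : ℕ) (y : M) :
    Δ_[h] ^[m] (g ∘ ψ) y = Δ_[ψ h] ^[m] g (ψ y) := by
  simp only [fwdDiff_iter_eq_sum_shift, comp_apply, map_add, map_nsmul]

theorem norm_fwdDiff_iter_le {E : Type*} [SeminormedAddCommGroup E] {b : M → E} {m : ℕ} {y : M}
    {B : ℝ} (hb : ∀ i ≤ m, ‖b (y + i • h)‖ ≤ B) : ‖Δ_[h] ^[m] b y‖ ≤ 2 ^ m * B := by
  rw [fwdDiff_iter_eq_sum_shift]
  calc ‖∑ i ∈ range (m + 1), ((-1 : ℤ) ^ (m - i) * m.choose i) • b (y + i • h)‖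
      ≤ ∑ i ∈ range (m + 1), (m.choose i : ℝ) * B := by
        refine norm_sum_le_of_le _ fun i hi => ?_
        refine (norm_zsmul_le _ _).trans ?_
        have hB := hb i (mem_range_succ_iff.mp hi)
        simp only [norm_mul, norm_pow, norm_neg, norm_one, one_pow, one_mul, Int.norm_natCast]
        gcongr
    _ = 2 ^ m * B := by rw [← sum_mul, ← Nat.cast_sum, Nat.sum_range_choose]; push_cast; ring

end ForwardDifference

theorem hasDerivAt_fwdDiff_iter {F : Type*} [NormedAddCommGroup F] [NormedSpace ℝ F]
    {f : ℝ → F} {h t : ℝ} {r : ℕ} (hf : ∀ i ≤ r, DifferentiableAt ℝ f (t + i • h)) :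
    HasDerivAt (Δ_[h] ^[r] f) (Δ_[h] ^[r] (deriv f) t) t := by
  simp only [funext (fwdDiff_iter_eq_sum_shift h f r), fwdDiff_iter_eq_sum_shift h (deriv f) r,
    ← Int.cast_smul_eq_zsmul ℝ]
  refine HasDerivAt.fun_sum fun i hi => ?_
  exact ((hf i (mem_range_succ_iff.mp hi)).hasDerivAt.comp_add_const t _).const_smul _

theorem abs_fwdDiff_iter_le_of_abs_iteratedDeriv_le {f : ℝ → ℝ} {r : ℕ} {x M : ℝ}
    (hf : ∀ m < r, ∀ t ∈ Set.Icc x (x + r), DifferentiableAt ℝ (iteratedDeriv m f) t)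
    (hM : ∀ t ∈ Set.Icc x (x + r), |iteratedDeriv r f t| ≤ M) : |Δ_[1] ^[r] f x| ≤ M := by
  induction r generalizing f x with
  | zero => simpa using hM x (by simp)
  | succ r ih =>
    -- `Δ^{r+1} f x = (Δ^r f)' c = Δ^r f' c` for some `c ∈ (x, x + 1)`
    have hderiv : ∀ t ∈ Set.Icc x (x + 1), HasDerivAt (Δ_[1] ^[r] f) (Δ_[1] ^[r] (deriv f) t) t :=
      fun t ht => hasDerivAt_fwdDiff_iter fun i hi => by
        simpa using hf 0 (by omega) (t + i) ⟨by linarith [ht.1, (i.cast_nonneg : (0:ℝ) ≤ i)],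
          by push_cast; linarith [ht.2, (show (i : ℝ) ≤ r by exact_mod_cast hi)]⟩
    obtain ⟨c, hc, hslope⟩ := exists_hasDerivAt_eq_slope _ _ (lt_add_one x)
      (fun t ht => (hderiv t ht).continuousAt.continuousWithinAt)
      (fun t ht => hderiv t (Set.Ioo_subset_Icc_self ht))
    rw [add_sub_cancel_left, div_one] at hslope
    rw [iterate_succ_apply', fwdDiff, ← hslope]
    have hsub : Set.Icc c (c + r) ⊆ Set.Icc x (x + (r + 1 : ℕ)) :=
      Set.Icc_subset_Icc hc.1.le (by push_cast; linarith [hc.2])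
    refine ih (fun m hm t ht => ?_) (fun t ht => ?_)
    · rw [← iteratedDeriv_succ']
      exact hf (m + 1) (by omega) t (hsub ht)
    · rw [← iteratedDeriv_succ']
      exact hM t (hsub ht)

section Binomial

variable {R : Type*} [CommRing R]

theorem fwdDiff_iter_choose_sub_add {n d k j : ℕ} (hk : k ≤ d) (hjk : j + k ≤ n) :
    Δ_[1] ^[k] (fun y : ℕ => ((n - y + d).choose d : R)) j =
      (-1) ^ k * (n - (j + k) + d).choose (d - k) := by
  induction k generalizing j with
  | zero => simp
  | succ k ih =>
    rw [iterate_succ_apply', fwdDiff, ih (by omega) (by omega), ih (by omega) (by omega),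
      show j + 1 + k = j + (k + 1) by omega,
      show n - (j + k) + d = n - (j + (k + 1)) + d + 1 by omega,
      show d - k = d - (k + 1) + 1 by omega, Nat.choose_succ_succ']
    push_cast
    ring

theorem fwdDiff_iter_succ_choose_sub_add {n d j : ℕ} (hjn : j + (d + 1) ≤ n) :
    Δ_[1] ^[d + 1] (fun y : ℕ => ((n - y + d).choose d : R)) j = 0 := by
  rw [iterate_succ_apply', fwdDiff, fwdDiff_iter_choose_sub_add le_rfl (by omega),
    fwdDiff_iter_choose_sub_add le_rfl (by omega)]
  simp

end Binomial

theorem Nat.pow_le_factorial_mul_choose (n d : ℕ) : n ^ d ≤ d ! * (n + d).choose d := by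
  rw [← Nat.ascFactorial_eq_factorial_mul_choose]
  exact (Nat.pow_succ_le_ascFactorial n d).trans (Nat.ascFactorial_le d n.le_succ)

theorem Nat.choose_sub_mul_choose_le {n d j k : ℕ} (hk : k ≤ d) (hj : 1 ≤ j) (hjk : j + k ≤ n) :
    (n - (j + k) + d).choose (d - k) * (j + d).choose d ≤
      (d + 1) ^ (2 * d) * d ! * j ^ (d - k) * (n + d).choose d := by
  have hnd : n - (j + k) + d ≤ (d + 1) * n := by nlinarith [Nat.sub_le n (j + k)]
  calc (n - (j + k) + d).choose (d - k) * (j + d).choose d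
      ≤ ((d + 1) * n) ^ (d - k) * ((d + 1) * j) ^ d := by
        gcongr
        · exact (Nat.choose_le_pow _ _).trans (Nat.pow_le_pow_left hnd _)
        · exact (Nat.choose_le_pow _ _).trans (Nat.pow_le_pow_left (by nlinarith) _)
    _ = (d + 1) ^ (d - k) * (d + 1) ^ d * j ^ (d - k) * (n ^ (d - k) * j ^ k) := by
        rw [mul_pow, mul_pow, ← Nat.sub_add_cancel hk, pow_add j]
        simp only [Nat.sub_add_cancel hk]
        ring
    _ ≤ (d + 1) ^ d * (d + 1) ^ d * j ^ (d - k) * (n ^ (d - k) * n ^ k) := by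
        gcongr <;> omega
    _ ≤ (d + 1) ^ (2 * d) * d ! * j ^ (d - k) * (n + d).choose d := by
        rw [← pow_add n, Nat.sub_add_cancel hk, two_mul, pow_add]
        have := Nat.pow_le_factorial_mul_choose n d
        calc (d + 1) ^ d * (d + 1) ^ d * j ^ (d - k) * n ^ d
            ≤ (d + 1) ^ d * (d + 1) ^ d * j ^ (d - k) * (d ! * (n + d).choose d) := by gcongr
          _ = _ := by ring

theorem abs_fwdDiff_iter_choose_mul_le {n d j : ℕ} (hj : 1 ≤ j) (hjn : j + (d + 1) ≤ n)
    {v : ℕ → ℝ} {B : ℝ} (hv : ∀ k ≤ d, |Δ_[1] ^[d + 1 - k] v (j + k)| ≤ B / j ^ (d - k)) :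
    |Δ_[1] ^[d + 1] (fun y : ℕ => ((n - y + d).choose d : ℝ) * v y) j| * (j + d).choose d ≤
      2 ^ (d + 1) * ((d + 1) ^ (2 * d) * d ! * B * (n + d).choose d) := by
  have hjpos : (0 : ℝ) < j := by exact_mod_cast hj
  have hB : 0 ≤ B := by
    have := mul_nonneg ((abs_nonneg _).trans (hv 0 d.zero_le)) (pow_pos hjpos d).le
    rwa [Nat.sub_zero, div_mul_cancel₀ _ (pow_pos hjpos d).ne'] at this
  set X : ℝ := (d + 1) ^ (2 * d) * d ! * B * (n + d).choose d
  have hterm : ∀ k ∈ range (d + 1 + 1),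
      |(d + 1).choose k * (Δ_[1] ^[k] (fun y : ℕ => ((n - y + d).choose d : ℝ)) j *
        Δ_[1] ^[d + 1 - k] v (j + k • 1))| * (j + d).choose d ≤ (d + 1).choose k * X := by
    intro k hk
    obtain hkd | rfl : k ≤ d ∨ k = d + 1 := by rw [Finset.mem_range] at hk; omega
    · rw [fwdDiff_iter_choose_sub_add hkd (by omega), smul_eq_mul, mul_one]
      simp only [abs_mul, abs_pow, abs_neg, abs_one, one_pow, one_mul, Nat.abs_cast]
      have hprod : ((n - (j + k) + d).choose (d - k) * (j + d).choose d : ℝ) ≤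
          (d + 1) ^ (2 * d) * d ! * j ^ (d - k) * (n + d).choose d := by
        exact_mod_cast Nat.choose_sub_mul_choose_le hkd hj (by omega)
      calc (d + 1).choose k * ((n - (j + k) + d).choose (d - k) *
            |Δ_[1] ^[d + 1 - k] v (j + k)|) * (j + d).choose d
          ≤ (d + 1).choose k * ((n - (j + k) + d).choose (d - k) *
            (B / j ^ (d - k))) * (j + d).choose d := by gcongr; exact hv k hkd
        _ = (d + 1).choose k * (((n - (j + k) + d).choose (d - k) * (j + d).choose d : ℝ) *
            B / j ^ (d - k)) := by ring
        _ ≤ (d + 1).choose k * ((d + 1) ^ (2 * d) * d ! * j ^ (d - k) * (n + d).choose d *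
            B / j ^ (d - k)) := by gcongr
        _ = (d + 1).choose k * X := by field_simp; ring
    · rw [fwdDiff_iter_succ_choose_sub_add (by omega)]
      simp only [zero_mul, mul_zero, abs_zero]
      positivity
  calc |Δ_[1] ^[d + 1] ((fun y : ℕ => ((n - y + d).choose d : ℝ)) * v) j| * (j + d).choose d
      ≤ ∑ k ∈ range (d + 1 + 1), |(d + 1).choose k * (Δ_[1] ^[k]
          (fun y : ℕ => ((n - y + d).choose d : ℝ)) j * Δ_[1] ^[d + 1 - k] v (j + k • 1))| *
            (j + d).choose d := by
        rw [fwdDiff_iter_mul, ← sum_mul]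
        gcongr
        exact abs_sum_le_sum_abs _ _
    _ ≤ ∑ k ∈ range (d + 1 + 1), ((d + 1).choose k : ℝ) * X := sum_le_sum hterm
    _ = 2 ^ (d + 1) * X := by rw [← sum_mul, ← Nat.cast_sum, Nat.sum_range_choose]; push_cast; ring

theorem le_mul_exp_of_abs_deriv_le {g g' : ℝ → ℝ} {K a b : ℝ} (hab : a ≤ b)
    (hg : ∀ t ∈ Set.Icc a b, HasDerivAt g (g' t) t) (hpos : ∀ t ∈ Set.Icc a b, 0 ≤ g t)
    (hbound : ∀ t ∈ Set.Icc a b, |g' t| ≤ K * g t) : g b ≤ g a * exp (K * (b - a)) := by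
  have := norm_le_gronwallBound_of_norm_deriv_right_le (ε := 0) (δ := g a)
    (fun t ht => (hg t ht).continuousAt.continuousWithinAt)
    (fun t ht => (hg t (Set.Ico_subset_Icc_self ht)).hasDerivWithinAt)
    (by rw [Real.norm_eq_abs, abs_of_nonneg (hpos a ⟨le_rfl, hab⟩)])
    (fun t ht => by
      rw [Real.norm_eq_abs, Real.norm_eq_abs, abs_of_nonneg (hpos t (Set.Ico_subset_Icc_self ht)),
        add_zero]
      exact hbound t (Set.Ico_subset_Icc_self ht)) b ⟨hab, le_rfl⟩
  rwa [gronwallBound_ε0, Real.norm_eq_abs, abs_of_nonneg (hpos b ⟨hab, le_rfl⟩)] at this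

theorem le_mul_exp_of_abs_deriv_le' {g g' : ℝ → ℝ} {K a b : ℝ} (hab : a ≤ b)
    (hg : ∀ t ∈ Set.Icc a b, HasDerivAt g (g' t) t) (hpos : ∀ t ∈ Set.Icc a b, 0 ≤ g t)
    (hbound : ∀ t ∈ Set.Icc a b, |g' t| ≤ K * g t) : g a ≤ g b * exp (K * (b - a)) := by
  have hneg : ∀ {t}, t ∈ Set.Icc (-b) (-a) → -t ∈ Set.Icc a b := fun ht =>
    ⟨le_neg_of_le_neg ht.2, neg_le.mp ht.1⟩
  have := le_mul_exp_of_abs_deriv_le (g := fun t => g (-t)) (g' := fun t => -g' (-t)) (K := K)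
    (neg_le_neg hab) (fun t ht => by
      have h := (hg _ (hneg ht)).comp t (hasDerivAt_neg' t)
      rwa [mul_neg_one] at h)
    (fun t ht => hpos _ (hneg ht)) (fun t ht => by simpa using hbound _ (hneg ht))
  simpa [neg_add_eq_sub] using this

theorem deriv_nonneg_of_monotoneOn_Ici {f : ℝ → ℝ} {a t : ℝ} (hf : MonotoneOn f (Set.Ici a))
    (ht : a ≤ t) (hdiff : DifferentiableAt ℝ f t) : 0 ≤ deriv f t := by
  rw [← hdiff.derivWithin (uniqueDiffOn_Ici a t ht)]
  exact hf.derivWithin_nonneg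

section Weight

variable {f : ℝ → ℝ} {d : ℕ} {K : ℝ}

theorem deriv_le_deriv_mul_exp (hd : 1 ≤ d)
    (hdiff : ∀ m ≤ d, ∀ t, 1 ≤ t → DifferentiableAt ℝ (iteratedDeriv m f) t)
    (hbound : ∀ m, 1 ≤ m → m ≤ d + 1 → ∀ t, 1 ≤ t →
      |iteratedDeriv m f t| ≤ K * deriv f t / t ^ (m - 1))
    (hf' : ∀ t, 1 ≤ t → 0 ≤ deriv f t) {a b : ℝ} (ha : 1 ≤ a) (hab : a ≤ b) :
    deriv f b ≤ deriv f a * exp (K * (b - a)) ∧ deriv f a ≤ deriv f b * exp (K * (b - a)) := by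
  have hg : ∀ t ∈ Set.Icc a b, HasDerivAt (deriv f) (iteratedDeriv 2 f t) t := fun t ht => by
    simpa [iteratedDeriv_succ] using (hdiff 1 hd t (ha.trans ht.1)).hasDerivAt
  have hpos : ∀ t ∈ Set.Icc a b, 0 ≤ deriv f t := fun t ht => hf' t (ha.trans ht.1)
  have hK : ∀ t ∈ Set.Icc a b, |iteratedDeriv 2 f t| ≤ K * deriv f t := fun t ht => by
    have h2 := hbound 2 (by omega) (by omega) t (ha.trans ht.1)
    rw [show 2 - 1 = 1 from rfl, pow_one] at h2
    have htpos : 0 < t := by linarith [ht.1]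
    have hnn : 0 ≤ K * deriv f t := by
      simpa [div_mul_cancel₀ _ htpos.ne'] using mul_nonneg ((abs_nonneg _).trans h2) htpos.le
    exact h2.trans (div_le_self hnn (ha.trans ht.1))
  exact ⟨le_mul_exp_of_abs_deriv_le hab hg hpos hK, le_mul_exp_of_abs_deriv_le' hab hg hpos hK⟩

theorem abs_fwdDiff_iter_le_deriv_div_pow (hd : 1 ≤ d) (hK : 0 ≤ K)
    (hdiff : ∀ m ≤ d, ∀ t, 1 ≤ t → DifferentiableAt ℝ (iteratedDeriv m f) t)
    (hbound : ∀ m, 1 ≤ m → m ≤ d + 1 → ∀ t, 1 ≤ t →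
      |iteratedDeriv m f t| ≤ K * deriv f t / t ^ (m - 1))
    (hf' : ∀ t, 1 ≤ t → 0 ≤ deriv f t) {j : ℝ} (hj : 1 ≤ j) {k : ℕ} (hk : k ≤ d) :
    |Δ_[1] ^[d + 1 - k] f (j + k)| ≤ K * exp (K * (d + 1)) * deriv f j / j ^ (d - k) := by
  have hk0 : (0 : ℝ) ≤ k := k.cast_nonneg
  refine abs_fwdDiff_iter_le_of_abs_iteratedDeriv_le
    (fun m hm t ht => hdiff m (by omega) t (by linarith [ht.1])) fun t ht => ?_
  have hjt : j ≤ t := by linarith [ht.1]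
  have htj : t - j ≤ d + 1 := by
    have := ht.2
    rw [Nat.cast_sub (by omega)] at this
    push_cast at this
    linarith
  calc |iteratedDeriv (d + 1 - k) f t| ≤ K * deriv f t / t ^ (d - k) := by
        simpa [show d + 1 - k - 1 = d - k by omega] using
          hbound (d + 1 - k) (by omega) (by omega) t (hj.trans hjt)
    _ ≤ K * (deriv f j * exp (K * (t - j))) / j ^ (d - k) := by
        gcongr
        · exact mul_nonneg hK (mul_nonneg (hf' j hj) (exp_pos _).le)
        · exact (deriv_le_deriv_mul_exp hd hdiff hbound hf' hj hjt).1
    _ ≤ K * (deriv f j * exp (K * (d + 1))) / j ^ (d - k) := by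
        gcongr
        exact hf' j hj
    _ = K * exp (K * (d + 1)) * deriv f j / j ^ (d - k) := by ring

theorem deriv_le_exp_mul_sub (hd : 1 ≤ d) (hK : 0 ≤ K)
    (hdiff : ∀ m ≤ d, ∀ t, 1 ≤ t → DifferentiableAt ℝ (iteratedDeriv m f) t)
    (hbound : ∀ m, 1 ≤ m → m ≤ d + 1 → ∀ t, 1 ≤ t →
      |iteratedDeriv m f t| ≤ K * deriv f t / t ^ (m - 1))
    (hf' : ∀ t, 1 ≤ t → 0 ≤ deriv f t) {a : ℝ} (ha : 1 ≤ a) :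
    deriv f a ≤ exp K * (f (a + 1) - f a) := by
  have hderiv : ∀ t ∈ Set.Icc a (a + 1), HasDerivAt f (deriv f t) t := fun t ht => by
    simpa using (hdiff 0 (Nat.zero_le d) t (ha.trans ht.1)).hasDerivAt
  obtain ⟨c, hc, hslope⟩ := exists_hasDerivAt_eq_slope f (deriv f) (lt_add_one a)
    (fun t ht => (hderiv t ht).continuousAt.continuousWithinAt)
    (fun t ht => hderiv t (Set.Ioo_subset_Icc_self ht))
  rw [add_sub_cancel_left, div_one] at hslope
  calc deriv f a ≤ deriv f c * exp (K * (c - a)) :=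
        (deriv_le_deriv_mul_exp hd hdiff hbound hf' ha hc.1.le).2
    _ ≤ deriv f c * exp K := by
        gcongr
        · exact hf' c (by linarith [hc.1])
        · nlinarith [hc.2]
    _ = exp K * (f (a + 1) - f a) := by rw [hslope, mul_comm]

end Weight

theorem Acoef_natCast_sub {n y : ℕ} (d : ℕ) (hy : y ≤ n) :
    Acoef ((n : ℤ) - y) d = ((n - y + d).choose d : ℝ) := by
  rw [Acoef, if_pos (by omega), show ((n : ℤ) - y).toNat = n - y by omega, Nat.choose_symm_add]

theorem Acoef_nonneg (k : ℤ) (d : ℕ) : 0 ≤ Acoef k d := by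
  unfold Acoef
  split <;> positivity

theorem Acoef_mono (d : ℕ) : Monotone fun k : ℤ => Acoef k d := by
  intro k l hkl
  by_cases hk : 0 ≤ k
  · simp only [Acoef, if_pos hk, if_pos (hk.trans hkl), Nat.choose_symm_add]
    exact_mod_cast Nat.choose_le_choose d (by omega)
  · simpa [Acoef, if_neg hk] using Acoef_nonneg l d

theorem Nat.choose_sub_add_mul_choose_le {n d j : ℕ} (hjn : j ≤ n)
    (hj : j = 0 ∨ n < j + (d + 1)) :
    (n - j + d).choose d * (j + d).choose d ≤ (2 * d).choose d * (n + d).choose d := by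
  rcases hj with rfl | hj
  · simpa using Nat.le_mul_of_pos_left _ (Nat.choose_pos (by omega : d ≤ 2 * d))
  · exact Nat.mul_le_mul (Nat.choose_le_choose d (by omega)) (Nat.choose_le_choose d (by omega))

/-- The paper's `b_y = A_{n-y}^d f(y)`, with `f` extended by `f 1` below `1`. -/
def weightedSeq (f : ℝ → ℝ) (n d y : ℕ) : ℝ :=
  Acoef ((n : ℤ) - y) d * f (max (y : ℝ) 1)

theorem abs_sum_eq_abs_fwdDiff_iter_weightedSeq (f : ℝ → ℝ) (n d m j : ℕ) :
    |∑ i ∈ range (m + 1), (-1 : ℝ) ^ i * (m.choose i : ℝ) *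
        (Acoef ((n : ℤ) - ((j + i : ℕ) : ℤ)) d * f (max ((j + i : ℕ) : ℝ) 1))| =
      |Δ_[1] ^[m] (weightedSeq f n d) j| := by
  have := sum_neg_one_pow_mul_choose_mul 1 (weightedSeq f n d) m j
  simp only [smul_eq_mul, mul_one, weightedSeq] at this
  rw [this, abs_mul, abs_pow, abs_neg, abs_one, one_pow, one_mul]

section WeightedSeq

variable {f : ℝ → ℝ} {n d j : ℕ}

theorem abs_fwdDiff_iter_weightedSeq_mul_choose_le_of_interior (hd : 1 ≤ d) {K : ℝ} (hK : 0 ≤ K)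
    (hdiff : ∀ m ≤ d, ∀ t, 1 ≤ t → DifferentiableAt ℝ (iteratedDeriv m f) t)
    (hbound : ∀ m, 1 ≤ m → m ≤ d + 1 → ∀ t, 1 ≤ t →
      |iteratedDeriv m f t| ≤ K * deriv f t / t ^ (m - 1))
    (hf' : ∀ t, 1 ≤ t → 0 ≤ deriv f t) (hj : 1 ≤ j) (hjn : j + (d + 1) ≤ n) :
    |Δ_[1] ^[d + 1] (weightedSeq f n d) j| * (j + d).choose d ≤
      2 ^ (d + 1) * ((d + 1) ^ (2 * d) * d ! * (K * exp (K * (d + 1))) * exp K) *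
        (n + d).choose d * (f (j + 1) - f j) := by
  have hjR : (1 : ℝ) ≤ j := by exact_mod_cast hj
  have hseq : Δ_[1] ^[d + 1] (weightedSeq f n d) j = Δ_[1] ^[d + 1]
      (fun y : ℕ => ((n - y + d).choose d : ℝ) * (f ∘ Nat.castAddMonoidHom ℝ) y) j :=
    fwdDiff_iter_congr 1 fun i hi => by
      have hji : (1 : ℝ) ≤ (j + i • 1 : ℕ) := by norm_cast; omega
      rw [weightedSeq, Acoef_natCast_sub d (by simp; omega), max_eq_left hji]
      rfl
  calc |Δ_[1] ^[d + 1] (weightedSeq f n d) j| * (j + d).choose d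
      ≤ 2 ^ (d + 1) * ((d + 1) ^ (2 * d) * d ! * (K * exp (K * (d + 1)) * deriv f j) *
          (n + d).choose d) := by
        rw [hseq]
        refine abs_fwdDiff_iter_choose_mul_le hj hjn fun k hk => ?_
        rw [fwdDiff_iter_comp_addMonoidHom]
        simpa using abs_fwdDiff_iter_le_deriv_div_pow hd hK hdiff hbound hf' hjR hk
    _ ≤ 2 ^ (d + 1) * ((d + 1) ^ (2 * d) * d ! * (K * exp (K * (d + 1)) *
          (exp K * (f (j + 1) - f j))) * (n + d).choose d) := by
        gcongr
        exact deriv_le_exp_mul_sub hd hK hdiff hbound hf' hjR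
    _ = _ := by ring

theorem abs_fwdDiff_iter_weightedSeq_mul_choose_le_of_boundary (hpos : ∀ t, 1 ≤ t → 0 ≤ f t)
    (hmono : ∀ x y, 1 ≤ x → x ≤ y → f x ≤ f y) (hn : 1 ≤ n) (hjn : j ≤ n)
    (hj : j = 0 ∨ n < j + (d + 1)) :
    |Δ_[1] ^[d + 1] (weightedSeq f n d) j| * (j + d).choose d ≤
      2 ^ (d + 1) * (2 * d).choose d * f n * (n + d).choose d := by
  have hfn : 0 ≤ f n := hpos n (by exact_mod_cast hn)
  have hb : ∀ i ≤ d + 1, ‖weightedSeq f n d (j + i • 1)‖ ≤ Acoef ((n : ℤ) - j) d * f n := by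
    intro i _
    rw [Real.norm_eq_abs, weightedSeq,
      abs_of_nonneg (mul_nonneg (Acoef_nonneg _ _) (hpos _ (le_max_right _ _)))]
    by_cases hy : j + i • 1 ≤ n
    · exact mul_le_mul (Acoef_mono d (by push_cast; omega))
        (hmono _ _ (le_max_right _ _) (max_le (by exact_mod_cast hy) (by exact_mod_cast hn)))
        (hpos _ (le_max_right _ _)) (Acoef_nonneg _ _)
    · rw [Acoef, if_neg (by push_cast; omega), zero_mul]
      exact mul_nonneg (Acoef_nonneg _ _) hfn
  have hchoose :
      Acoef ((n : ℤ) - j) d * (j + d).choose d ≤ (2 * d).choose d * (n + d).choose d := by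
    rw [Acoef_natCast_sub d hjn]
    exact_mod_cast Nat.choose_sub_add_mul_choose_le hjn hj
  calc |Δ_[1] ^[d + 1] (weightedSeq f n d) j| * (j + d).choose d
      ≤ 2 ^ (d + 1) * (Acoef ((n : ℤ) - j) d * f n) * (j + d).choose d := by
        gcongr
        exact norm_fwdDiff_iter_le 1 hb
    _ = 2 ^ (d + 1) * (Acoef ((n : ℤ) - j) d * (j + d).choose d * f n) := by ring
    _ ≤ 2 ^ (d + 1) * ((2 * d).choose d * (n + d).choose d * f n) := by gcongr
    _ = 2 ^ (d + 1) * (2 * d).choose d * f n * (n + d).choose d := by ring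

end WeightedSeq

theorem sum_range_le_of_le_sub_of_le {T F : ℕ → ℝ} {n d : ℕ} {a b : ℝ} (hn : 1 ≤ n)
    (hF : ∀ j, 1 ≤ j → F j ≤ F (j + 1)) (hF1 : 0 ≤ F 1) (ha : 0 ≤ a) (hb : 0 ≤ b)
    (hinterior : ∀ j, 1 ≤ j → j + (d + 1) ≤ n → T j ≤ a * (F (j + 1) - F j))
    (hboundary : ∀ j ≤ n, j = 0 ∨ n < j + (d + 1) → T j ≤ b) :
    ∑ j ∈ range (n + 1), T j ≤ a * F n + (d + 2) * b := by
  set P : ℕ → Prop := fun j => 1 ≤ j ∧ j + (d + 1) ≤ n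
  rw [← sum_filter_add_sum_filter_not (range (n + 1)) P]
  gcongr ?_ + ?_
  · calc ∑ j ∈ (range (n + 1)).filter P, T j
        ≤ ∑ j ∈ (range (n + 1)).filter P, a * (F (j + 1) - F j) :=
          sum_le_sum fun j hj => hinterior j (mem_filter.mp hj).2.1 (mem_filter.mp hj).2.2
      _ ≤ ∑ j ∈ Ico 1 n, a * (F (j + 1) - F j) :=
          sum_le_sum_of_subset_of_nonneg (fun j hj => by simp [P] at hj ⊢; omega)
            fun j hj _ => mul_nonneg ha (sub_nonneg.mpr (hF j (mem_Ico.mp hj).1))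
      _ ≤ a * F n := by rw [← mul_sum, sum_Ico_sub _ hn]; nlinarith
  · have hcard : ((range (n + 1)).filter fun j => ¬P j).card ≤ d + 2 := by
      have hsub : (range (n + 1)).filter (fun j => ¬P j) ⊆ insert 0 (Icc (n - d) n) :=
        fun j hj => by simp [P] at hj ⊢; omega
      have := (card_le_card hsub).trans (card_insert_le _ _)
      rw [Nat.card_Icc] at this
      omega
    calc ∑ j ∈ (range (n + 1)).filter (fun j => ¬P j), T j
        ≤ ∑ j ∈ (range (n + 1)).filter (fun j => ¬P j), b :=
          sum_le_sum fun j hj => by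
            simp only [P, mem_filter, mem_range] at hj
            exact hboundary j (by omega) (by omega)
      _ ≤ (d + 2) * b := by
          rw [sum_const, nsmul_eq_mul]
          gcongr
          exact_mod_cast hcard

theorem difference_sum_bound (d : ℕ) (hd : 1 ≤ d) (D C₀ : ℝ) :
    ∃ C : ℝ, ∀ f : ℝ → ℝ,
      (∀ t : ℝ, 1 ≤ t → 0 < f t) →
      (∀ x y : ℝ, 1 ≤ x → x ≤ y → f x ≤ f y) →
      (∀ x : ℝ, 1 ≤ x → f (2 * x) ≤ D * f x) →
      (∀ m : ℕ, m ≤ d → ∀ t : ℝ, 1 ≤ t → DifferentiableAt ℝ (iteratedDeriv m f) t) →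
      (∀ m : ℕ, 1 ≤ m → m ≤ d + 1 → ∀ t : ℝ, 1 ≤ t →
        |iteratedDeriv m f t| ≤ C₀ * deriv f t / t ^ (m - 1)) →
      ∀ n : ℕ, 1 ≤ n →
        ∑ j ∈ Finset.range (n + 1),
            |∑ i ∈ Finset.range (d + 2), (-1 : ℝ) ^ i * (Nat.choose (d + 1) i : ℝ) *
                (Acoef ((n : ℤ) - ((j + i : ℕ) : ℤ)) d * f (max ((j + i : ℕ) : ℝ) 1))| *
              (Nat.choose (j + d) j : ℝ)
          ≤ C * f (n : ℝ) * (Nat.choose (n + d) n : ℝ) := by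
  -- `K ≥ 0` keeps the Grönwall factor `exp (K * (t - j))` below `exp (K * (d + 1))`
  set K := max C₀ 0
  set c₁ : ℝ := 2 ^ (d + 1) * ((d + 1) ^ (2 * d) * d ! * (K * exp (K * (d + 1))) * exp K)
  set c₂ : ℝ := 2 ^ (d + 1) * (2 * d).choose d
  refine ⟨c₁ + (d + 2) * c₂, ?_⟩
  intro f hpos hmono _ hdiff hbound n hn
  have hf' : ∀ t, 1 ≤ t → 0 ≤ deriv f t := fun t ht =>
    deriv_nonneg_of_monotoneOn_Ici (fun x hx y _ hxy => hmono x y hx hxy) ht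
      (by simpa using hdiff 0 d.zero_le t ht)
  have hboundK : ∀ m, 1 ≤ m → m ≤ d + 1 → ∀ t : ℝ, 1 ≤ t →
      |iteratedDeriv m f t| ≤ K * deriv f t / t ^ (m - 1) := fun m h1 h2 t ht =>
    (hbound m h1 h2 t ht).trans (by gcongr; exacts [hf' t ht, le_max_left _ _])
  have hfn := hpos n (by exact_mod_cast hn)
  simp only [show d + 2 = d + 1 + 1 from rfl, abs_sum_eq_abs_fwdDiff_iter_weightedSeq,
    Nat.choose_symm_add]
  refine (sum_range_le_of_le_sub_of_le (F := fun j : ℕ => f j) (a := c₁ * (n + d).choose d)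
    (b := c₂ * f n * (n + d).choose d) hn
    (fun j hj => hmono _ _ (by exact_mod_cast hj) (by push_cast; linarith))
    (by simpa using (hpos 1 le_rfl).le) (by positivity) (by positivity)
    (fun j hj hjn => (abs_fwdDiff_iter_weightedSeq_mul_choose_le_of_interior hd
      (le_max_right _ _) hdiff hboundK hf' hj hjn).trans_eq (by push_cast; ring))
    (fun j hjn hj => abs_fwdDiff_iter_weightedSeq_mul_choose_le_of_boundary
      (fun t ht => (hpos t ht).le) hmono hn hjn hj)).trans_eq ?_
  ring
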